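/- Let H be a Hopf algebra over a commutative ring k with multiplication μ, unit map η, coproduct Δ, counit ε and antipode S, and let F be a Drinfel'd twist on H. Set β := μ((id⊗S)(F)) and β' := μ((S⊗id)(F⁻¹)), so that β·β' = 1 = β'·β, and define the twisted antipode S_F: H → H by S_F(ξ) := β·S(ξ)·β'. Then S_F is an antipode for the twisted bialgebra (H, Δ_F, ε): μ∘(S_F⊗id)∘Δ_F = η∘ε = μ∘(id⊗S_F)∘Δ_F. Consequently (H, μ, η, Δ_F, ε, S_F) is a Hopf algebra. -/

import Mathlib

/-!
Since `S` is an anti-homomorphism, `c ◁ u := S(u₁) c u₂` (`rightAdj c u`) is a right and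
`u ▷ c := u₁ c S(u₂)` (`leftAdj c u`) a left action of the algebra `H ⊗ H` on `H`, and
`1 ◁ Δξ = ε(ξ) = Δξ ▷ 1` are the antipode axioms. Now `β = F ▷ 1`, `β' = 1 ◁ F⁻¹` and
`μ(S_F ⊗ id)(u) = β (β' ◁ u)`, so
`μ(S_F ⊗ id)(Δ_F ξ) = β (((β' ◁ F) ◁ Δξ) ◁ F⁻¹) = β ((1 ◁ Δξ) ◁ F⁻¹) = ε(ξ) β β'`,
because `β' ◁ F = 1 ◁ F⁻¹F = 1`; the other side is symmetric. Finally `β β' = 1`: the cocycle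
condition gives `F⁻¹₂₃ F₁₂ = (id⊗Δ)(F) · (Δ⊗id)(F⁻¹)`, and `x ⊗ y ⊗ z ↦ x S(y) z` maps the left
side to `β β'` and the right side to `(id⊗ε)(F) · (ε⊗id)(F⁻¹) = 1`.
-/

open TensorProduct

noncomputable section

namespace Stmt

variable (R : Type*) [CommRing R] (H : Type*) [Ring H] [HopfAlgebra R H]

/-- Comultiplication as an algebra homomorphism. -/
def Δ : H →ₐ[R] H ⊗[R] H := Bialgebra.comulAlgHom R H

/-- Counit as an algebra homomorphism. -/
def ε : H →ₐ[R] R := Bialgebra.counitAlgHom R H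

/-- Leg embedding `x ↦ x₁₂` of `H ⊗ H` into `H ⊗ H ⊗ H`. -/
def ι₁₂ : H ⊗[R] H →ₐ[R] H ⊗[R] (H ⊗[R] H) :=
  Algebra.TensorProduct.map (AlgHom.id R H) Algebra.TensorProduct.includeLeft

/-- Leg embedding `x ↦ x₂₃` of `H ⊗ H` into `H ⊗ H ⊗ H`. -/
def ι₂₃ : H ⊗[R] H →ₐ[R] H ⊗[R] (H ⊗[R] H) :=
  Algebra.TensorProduct.includeRight

/-- `Δ ⊗ id : H ⊗ H → H ⊗ H ⊗ H` (re-associated). -/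
def Δ₁ : H ⊗[R] H →ₐ[R] H ⊗[R] (H ⊗[R] H) :=
  (Algebra.TensorProduct.assoc R R R H H H).toAlgHom.comp
    (Algebra.TensorProduct.map (Δ R H) (AlgHom.id R H))

/-- `id ⊗ Δ : H ⊗ H → H ⊗ H ⊗ H`. -/
def Δ₂ : H ⊗[R] H →ₐ[R] H ⊗[R] (H ⊗[R] H) :=
  Algebra.TensorProduct.map (AlgHom.id R H) (Δ R H)

/-- `ε ⊗ id : H ⊗ H → H`. -/
def ε₁ : H ⊗[R] H →ₐ[R] H :=
  (Algebra.TensorProduct.lid R H).toAlgHom.comp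
    (Algebra.TensorProduct.map (ε R H) (AlgHom.id R H))

/-- `id ⊗ ε : H ⊗ H → H`. -/
def ε₂ : H ⊗[R] H →ₐ[R] H :=
  (Algebra.TensorProduct.rid R R H).toAlgHom.comp
    (Algebra.TensorProduct.map (AlgHom.id R H) (ε R H))

/-- The twisted coproduct `Δ_F(b) = F · Δ(b) · F⁻¹` as a `k`-linear map. -/
def DeltaF (F Finv : H ⊗[R] H) : H →ₗ[R] H ⊗[R] H :=
  (LinearMap.mulRight R Finv) ∘ₗ (LinearMap.mulLeft R F) ∘ₗ
    (Coalgebra.comul (R := R) (A := H))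

/-- `β := μ((id⊗S)(F)) = F₁ · S(F₂)` (leg notation). -/
def betaF (F : H ⊗[R] H) : H :=
  LinearMap.mul' R H
    ((TensorProduct.map LinearMap.id (HopfAlgebra.antipode (R := R))) F)

/-- `β' := μ((S⊗id)(F⁻¹)) = S(F̄₁) · F̄₂` (leg notation). -/
def betaF' (G : H ⊗[R] H) : H :=
  LinearMap.mul' R H
    ((TensorProduct.map (HopfAlgebra.antipode (R := R)) LinearMap.id) G)

/-- The twisted antipode `S_F(ξ) := β · S(ξ) · β'` as a `k`-linear map. -/
def SF (F Finv : H ⊗[R] H) : H →ₗ[R] H :=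
  (LinearMap.mulRight R (betaF' R H Finv)) ∘ₗ
    (LinearMap.mulLeft R (betaF R H F)) ∘ₗ (HopfAlgebra.antipode (R := R))

end Stmt

namespace HopfAlgebra

variable {R : Type*} [CommSemiring R] {H : Type*} [Semiring H] [HopfAlgebra R H]

def rightAdj (c : H) : H ⊗[R] H →ₗ[R] H :=
  LinearMap.mul' R H ∘ₗ TensorProduct.map (LinearMap.mulRight R c ∘ₗ antipode R) LinearMap.id

def leftAdj (c : H) : H ⊗[R] H →ₗ[R] H :=
  LinearMap.mul' R H ∘ₗ TensorProduct.map (LinearMap.mulRight R c) (antipode R)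

@[simp] lemma rightAdj_tmul (c x y : H) :
    rightAdj (R := R) c (x ⊗ₜ y) = antipode R x * c * y := rfl

@[simp] lemma leftAdj_tmul (c x y : H) :
    leftAdj (R := R) c (x ⊗ₜ y) = x * c * antipode R y := rfl

lemma rightAdj_mul (c : H) (u v : H ⊗[R] H) :
    rightAdj c (u * v) = rightAdj (rightAdj c u) v := by
  induction v using TensorProduct.induction_on with
  | zero => simp
  | add v₁ v₂ h₁ h₂ => simp only [mul_add, map_add, h₁, h₂]
  | tmul z w =>
    induction u using TensorProduct.induction_on with
    | zero => simp
    | add u₁ u₂ h₁ h₂ => simp only [add_mul, map_add, h₁, h₂, rightAdj_tmul, mul_add, add_mul]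
    | tmul x y => simp [antipode_mul_antidistrib, mul_assoc]

lemma leftAdj_mul (c : H) (u v : H ⊗[R] H) :
    leftAdj c (u * v) = leftAdj (leftAdj c v) u := by
  induction u using TensorProduct.induction_on with
  | zero => simp
  | add u₁ u₂ h₁ h₂ => simp only [add_mul, map_add, h₁, h₂]
  | tmul x y =>
    induction v using TensorProduct.induction_on with
    | zero => simp
    | add v₁ v₂ h₁ h₂ => simp only [mul_add, map_add, h₁, h₂, leftAdj_tmul, mul_add, add_mul]
    | tmul z w => simp [antipode_mul_antidistrib, mul_assoc]

@[simp] lemma rightAdj_apply_one (c : H) : rightAdj (R := R) c 1 = c := by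
  simp [Algebra.TensorProduct.one_def]

@[simp] lemma leftAdj_apply_one (c : H) : leftAdj (R := R) c 1 = c := by
  simp [Algebra.TensorProduct.one_def]

lemma rightAdj_one_apply_comul (a : H) :
    rightAdj 1 (Coalgebra.comul (R := R) a) = algebraMap R H (Coalgebra.counit a) := by
  simp [rightAdj, ← mul_antipode_rTensor_comul_apply (R := R) a, LinearMap.rTensor]

lemma leftAdj_one_apply_comul (a : H) :
    leftAdj 1 (Coalgebra.comul (R := R) a) = algebraMap R H (Coalgebra.counit a) := by
  simp [leftAdj, ← mul_antipode_lTensor_comul_apply (R := R) a, LinearMap.lTensor]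

lemma rightAdj_algebraMap (r : R) (u : H ⊗[R] H) :
    rightAdj (algebraMap R H r) u = algebraMap R H r * rightAdj 1 u := by
  induction u using TensorProduct.induction_on with
  | zero => simp
  | add u₁ u₂ h₁ h₂ => simp only [map_add, h₁, h₂, mul_add]
  | tmul x y => simp [Algebra.commutes, mul_assoc]

lemma leftAdj_algebraMap (r : R) (u : H ⊗[R] H) :
    leftAdj (algebraMap R H r) u = algebraMap R H r * leftAdj 1 u := by
  induction u using TensorProduct.induction_on with
  | zero => simp
  | add u₁ u₂ h₁ h₂ => simp only [map_add, h₁, h₂, mul_add]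
  | tmul x y => simp [Algebra.commutes, mul_assoc]

variable (R H) in
def mulAntipodeMul : H ⊗[R] (H ⊗[R] H) →ₗ[R] H :=
  LinearMap.mul' R H ∘ₗ (rightAdj 1).lTensor H

@[simp] lemma mulAntipodeMul_tmul (x : H) (w : H ⊗[R] H) :
    mulAntipodeMul R H (x ⊗ₜ w) = x * rightAdj 1 w := rfl

lemma mulAntipodeMul_assoc_tmul (w : H ⊗[R] H) (z : H) :
    mulAntipodeMul R H (Algebra.TensorProduct.assoc R R R H H H (w ⊗ₜ z)) =
      LinearMap.mul' R H ((antipode R).lTensor H w) * z := by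
  induction w using TensorProduct.induction_on with
  | zero => simp
  | add w₁ w₂ h₁ h₂ => simp only [add_tmul, map_add, h₁, h₂, add_mul]
  | tmul x y => simp [mul_assoc]

end HopfAlgebra

namespace Stmt

open HopfAlgebra

variable (R : Type*) [CommRing R] (H : Type*) [Ring H] [HopfAlgebra R H]

lemma betaF_eq_leftAdj (F : H ⊗[R] H) : betaF R H F = leftAdj 1 F := by
  simp [betaF, leftAdj, LinearMap.mulRight_one]

lemma betaF'_eq_rightAdj (G : H ⊗[R] H) : betaF' R H G = rightAdj 1 G := by
  simp [betaF', rightAdj, LinearMap.mulRight_one]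

lemma DeltaF_apply (F Finv : H ⊗[R] H) (a : H) :
    DeltaF R H F Finv a = F * Coalgebra.comul a * Finv := rfl

lemma mul'_map_SF_id (F Finv u : H ⊗[R] H) :
    LinearMap.mul' R H (TensorProduct.map (SF R H F Finv) LinearMap.id u) =
      betaF R H F * rightAdj (betaF' R H Finv) u := by
  induction u using TensorProduct.induction_on with
  | zero => simp
  | add u₁ u₂ h₁ h₂ => simp only [map_add, h₁, h₂, mul_add]
  | tmul x y => simp [SF, mul_assoc]

lemma mul'_map_id_SF (F Finv u : H ⊗[R] H) :
    LinearMap.mul' R H (TensorProduct.map LinearMap.id (SF R H F Finv) u) =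
      leftAdj (betaF R H F) u * betaF' R H Finv := by
  induction u using TensorProduct.induction_on with
  | zero => simp
  | add u₁ u₂ h₁ h₂ => simp only [map_add, h₁, h₂, add_mul]
  | tmul x y => simp [SF, mul_assoc]

lemma mulAntipodeMul_ι₂₃_mul_ι₁₂ (u v : H ⊗[R] H) :
    mulAntipodeMul R H (ι₂₃ R H v * ι₁₂ R H u) = betaF R H u * betaF' R H v := by
  rw [betaF_eq_leftAdj, betaF'_eq_rightAdj]
  induction u using TensorProduct.induction_on with
  | zero => simp
  | add u₁ u₂ h₁ h₂ => simp only [map_add, mul_add, h₁, h₂, add_mul]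
  | tmul x y =>
    change mulAntipodeMul R H ((1 ⊗ₜ v) * (x ⊗ₜ (y ⊗ₜ 1))) = _
    simp [rightAdj_mul, mul_assoc]

lemma mulAntipodeMul_Δ₂_mul (u : H ⊗[R] H) (w : H ⊗[R] (H ⊗[R] H)) :
    mulAntipodeMul R H (Δ₂ R H u * w) = ε₂ R H u * mulAntipodeMul R H w := by
  induction u using TensorProduct.induction_on with
  | zero => simp
  | add u₁ u₂ h₁ h₂ => simp only [map_add, add_mul, h₁, h₂]
  | tmul x y =>
    induction w using TensorProduct.induction_on with
    | zero => simp
    | add w₁ w₂ h₁ h₂ => simp only [map_add, mul_add, h₁, h₂]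
    | tmul z v =>
      change mulAntipodeMul R H ((x ⊗ₜ Coalgebra.comul y) * (z ⊗ₜ v)) = _
      simp [rightAdj_mul, rightAdj_one_apply_comul, rightAdj_algebraMap, ε₂, ε, Algebra.smul_def,
        Algebra.commutes, mul_assoc]

lemma mulAntipodeMul_Δ₁ (v : H ⊗[R] H) : mulAntipodeMul R H (Δ₁ R H v) = ε₁ R H v := by
  induction v using TensorProduct.induction_on with
  | zero => simp
  | add v₁ v₂ h₁ h₂ => simp only [map_add, h₁, h₂]
  | tmul x y =>
    simpa [Δ₁, Δ, ε₁, ε, Algebra.smul_def] using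
      mulAntipodeMul_assoc_tmul (Coalgebra.comul x) y

lemma betaF_mul_betaF'_eq_one (F Finv : H ⊗[R] H) (hF : F * Finv = 1) (hF' : Finv * F = 1)
    (hnorm₁ : ε₁ R H F = 1) (hnorm₂ : ε₂ R H F = 1)
    (hcoc : ι₁₂ R H F * Δ₁ R H F = ι₂₃ R H F * Δ₂ R H F) :
    betaF R H F * betaF' R H Finv = 1 := by
  have hlegs : ι₂₃ R H Finv * ι₁₂ R H F = Δ₂ R H F * Δ₁ R H Finv := by
    calc ι₂₃ R H Finv * ι₁₂ R H F
        = ι₂₃ R H Finv * (ι₁₂ R H F * Δ₁ R H F) * Δ₁ R H Finv := by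
          rw [mul_assoc (ι₂₃ R H Finv), mul_assoc (ι₁₂ R H F), ← map_mul, hF, map_one, mul_one]
      _ = Δ₂ R H F * Δ₁ R H Finv := by
          rw [hcoc, ← mul_assoc (ι₂₃ R H Finv), ← map_mul, hF', map_one, one_mul]
  have hε₁ : ε₁ R H Finv = 1 := by
    simpa [hnorm₁] using congrArg (ε₁ R H) hF'
  rw [← mulAntipodeMul_ι₂₃_mul_ι₁₂, hlegs, mulAntipodeMul_Δ₂_mul, mulAntipodeMul_Δ₁, hnorm₂, hε₁,
    one_mul]

lemma rightAdj_betaF'_of_inv_mul {F Finv : H ⊗[R] H} (hF' : Finv * F = 1) :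
    rightAdj (betaF' R H Finv) F = 1 := by
  rw [betaF'_eq_rightAdj, ← rightAdj_mul, hF', rightAdj_apply_one]

lemma leftAdj_betaF_of_inv_mul {F Finv : H ⊗[R] H} (hF' : Finv * F = 1) :
    leftAdj (betaF R H F) Finv = 1 := by
  rw [betaF_eq_leftAdj, ← leftAdj_mul, hF', leftAdj_apply_one]

/-- **The twisted antipode.**  For a Drinfel'd twist `F` (with two-sided inverse
`Finv`) on a Hopf algebra `H`, the twisted antipode `S_F` satisfies the antipode
axioms for the twisted bialgebra `(H, Δ_F, ε)`:
`μ∘(S_F⊗id)∘Δ_F = η∘ε = μ∘(id⊗S_F)∘Δ_F`.  Consequently `(H, μ, η, Δ_F, ε, S_F)` is a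
Hopf algebra. -/
theorem twisted_antipode
    (F Finv : H ⊗[R] H)
    (hF : F * Finv = 1) (hF' : Finv * F = 1)
    (hnorm₁ : ε₁ R H F = 1) (hnorm₂ : ε₂ R H F = 1)
    (hcoc : ι₁₂ R H F * Δ₁ R H F = ι₂₃ R H F * Δ₂ R H F) :
    (∀ ξ : H,
      LinearMap.mul' R H
          ((TensorProduct.map (SF R H F Finv) LinearMap.id) (DeltaF R H F Finv ξ)) =
        algebraMap R H (Coalgebra.counit (R := R) ξ)) ∧
    (∀ ξ : H,
      LinearMap.mul' R H
          ((TensorProduct.map LinearMap.id (SF R H F Finv)) (DeltaF R H F Finv ξ)) =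
        algebraMap R H (Coalgebra.counit (R := R) ξ)) := by
  have hββ' := betaF_mul_betaF'_eq_one R H F Finv hF hF' hnorm₁ hnorm₂ hcoc
  refine ⟨fun ξ => ?_, fun ξ => ?_⟩
  · rw [mul'_map_SF_id, DeltaF_apply, rightAdj_mul, rightAdj_mul,
      rightAdj_betaF'_of_inv_mul R H hF', rightAdj_one_apply_comul, rightAdj_algebraMap,
      ← betaF'_eq_rightAdj, ← mul_assoc,
      ← Algebra.commutes, mul_assoc, hββ', mul_one]
  · rw [mul'_map_id_SF, DeltaF_apply, leftAdj_mul, leftAdj_mul,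
      leftAdj_betaF_of_inv_mul R H hF', leftAdj_one_apply_comul, leftAdj_algebraMap,
      ← betaF_eq_leftAdj, mul_assoc, hββ', mul_one]

end Stmt
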